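/- For every γ ∈ Γ, the map γ' ↦ χ(γ, γ') is a continuous group homomorphism from Γ to the circle group S¹, and every continuous character of Γ arises this way for a unique γ ∈ Γ. -/

import Mathlib

noncomputable section

/-- `Γ = {z ∈ ℂ : |z| ∈ q^ℤ}`. -/
def Gamma (q : ℝ) : Set ℂ := {z | ∃ k : ℤ, ‖z‖ = q ^ k}

/-- `Γ̄ = Γ ∪ {0}`. -/
def GammaBar (q : ℝ) : Set ℂ := Gamma q ∪ {0}

/-- The representative of `arg z` modulo `2π` lying in `(-2π, 0]`; for
`γ = q^{iφ+k}` with `φ ∈ [0, 2π/|log q|)` one has `theta γ = φ · log q`. -/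
def theta (z : ℂ) : ℝ := if z.arg ≤ 0 then z.arg else z.arg - 2 * Real.pi

/-- The (real-valued) exponent `k` with `|z| = q^k`. -/
def kIdx (q : ℝ) (z : ℂ) : ℝ := Real.log ‖z‖ / Real.log q

/-- The bicharacter `χ(q^{iφ+k}, q^{iψ+l}) = q^{i(lφ+kψ)}`, written in terms of the
decomposition data `theta` and `kIdx`; it satisfies `χ(0, γ) = 1`. -/
def chi (q : ℝ) (z w : ℂ) : ℂ :=
  Complex.exp (Complex.I * ((kIdx q w * theta z + kIdx q z * theta w : ℝ) : ℂ))

/-- The exceptional set `{-1, -q^{-2}, -q^{-4}, …}`. -/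
def excSet (q : ℝ) : Set ℂ := {z | ∃ n : ℕ, z = -((q : ℂ) ^ (2 * n))⁻¹}

/-- The infinite product defining the quantum exponential function. -/
def FqProd (q : ℝ) (γ : ℂ) : ℂ :=
  ∏' k : ℕ, (1 + (q : ℂ) ^ (2 * k) * (starRingEnd ℂ) γ) / (1 + (q : ℂ) ^ (2 * k) * γ)

open Classical in
/-- Woronowicz's quantum exponential function `F_q`. -/
def Fq (q : ℝ) (γ : ℂ) : ℂ := if γ ∈ excSet q then -1 else FqProd q γ

section Aux
open Complex intervalIntegral

lemma char_classify (g : ℝ → ℂ) (hg : Continuous g)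
    (habs : ∀ t, ‖(g t)‖ = 1)
    (hmul : ∀ s t, g (s + t) = g s * g t)
    (hper : g (2 * Real.pi) = 1) :
    ∃ n : ℤ, ∀ t, g t = Complex.exp (n * t * Complex.I) := by
  have hne : ∀ t, g t ≠ 0 := by
    intro t h; have := habs t; rw [h] at this; simp at this
  have g0 : g 0 = 1 := by
    have h := hmul 0 0; simp at h
    exact (mul_left_cancel₀ (hne 0) (show g 0 * 1 = g 0 * g 0 by rw [mul_one, ← h])).symm
  set G : ℝ → ℂ := fun t => ∫ s in (0:ℝ)..t, g s with hGdef
  have hG : ∀ t, HasDerivAt G (g t) t := fun t =>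
    integral_hasDerivAt_right (hg.intervalIntegrable 0 t)
      (hg.stronglyMeasurableAtFilter _ _) hg.continuousAt
  have hG0 : G 0 = 0 := by simp [hGdef]
  -- find δ > 0 with G δ ≠ 0
  obtain ⟨δ, hδne, hδpos⟩ : ∃ δ : ℝ, G δ ≠ 0 ∧ 0 < δ := by
    have h1 : HasDerivAt G 1 0 := by rw [← g0]; exact hG 0
    have h2 := hasDerivAt_iff_tendsto_slope.1 h1
    have h3 : ∀ᶠ x in nhdsWithin 0 {(0:ℝ)}ᶜ, slope G 0 x ≠ 0 :=
      h2.eventually_ne one_ne_zero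
    have h4 : ∀ᶠ x in nhdsWithin 0 (Set.Ioi 0), slope G 0 x ≠ 0 :=
      h3.filter_mono (nhdsWithin_mono _ (fun x hx => ne_of_gt hx))
    obtain ⟨x, hx1, hx2⟩ := (h4.and (eventually_mem_nhdsWithin)).exists
    refine ⟨x, ?_, hx2⟩
    intro h0
    apply hx1
    simp [slope, h0, hG0]
  have key : ∀ t, g t * G δ = G (t + δ) - G t := by
    intro t
    have e1 : g t * G δ = ∫ s in (0:ℝ)..δ, g t * g s := by
      rw [intervalIntegral.integral_const_mul]
    have e2 : (∫ s in (0:ℝ)..δ, g t * g s) = ∫ s in (0:ℝ)..δ, g (t + s) := by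
      simp_rw [hmul]
    have e3 : (∫ s in (0:ℝ)..δ, g (t + s)) = ∫ s in (t + 0)..(t + δ), g s :=
      intervalIntegral.integral_comp_add_left g t
    have e4 : (∫ s in t..(t + δ), g s) = G (t + δ) - G t :=
      (integral_interval_sub_left (hg.intervalIntegrable 0 (t+δ)) (hg.intervalIntegrable 0 t)).symm
    rw [e1, e2, e3, add_zero, e4]
  set c : ℂ := (g δ - 1) / G δ with hcdef
  have hg' : ∀ t, HasDerivAt g (c * g t) t := by
    intro t
    have ha : HasDerivAt (fun t => G (t + δ)) (g (t + δ)) t :=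
      HasDerivAt.comp_add_const t δ (hG (t + δ))
    have h1 : HasDerivAt (fun t => (G (t + δ) - G t) / G δ)
        ((g (t + δ) - g t) / G δ) t := (ha.sub (hG t)).div_const _
    have hd : (g (t + δ) - g t) / G δ = c * g t := by
      rw [hmul t δ, hcdef]
      field_simp
    have h1' : HasDerivAt (fun t => (G (t + δ) - G t) / G δ) (c * g t) t := hd ▸ h1
    exact h1'.congr_of_eventuallyEq
      (Filter.Eventually.of_forall fun x => by rw [eq_div_iff hδne, key])
  -- solve the ODE: g t = exp (c * t)
  have hexp : ∀ t : ℝ, g t = Complex.exp (c * t) := by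
    have hder : ∀ t : ℝ, HasDerivAt (fun t : ℝ => g t * Complex.exp (-(c * t))) 0 t := by
      intro t
      have he : HasDerivAt (fun t : ℝ => Complex.exp (-(c * t)))
          (-c * Complex.exp (-(c * t))) t := by
        have h1 : HasDerivAt (fun z : ℂ => Complex.exp (-(c * z)))
            (-c * Complex.exp (-(c * (t : ℂ)))) (t : ℂ) := by
          have := (((hasDerivAt_id (t : ℂ)).const_mul c).neg).cexp
          simp only [Pi.neg_apply, id, mul_one] at this
          exact this.congr_deriv (by ring)
        exact h1.comp_ofReal
      have := (hg' t).mul he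
      exact this.congr_deriv (by ring)
    have hconst : ∀ t : ℝ, g t * Complex.exp (-(c * t)) = 1 := by
      intro t
      have := is_const_of_deriv_eq_zero (f := fun t : ℝ => g t * Complex.exp (-(c * t)))
        (fun x => (hder x).differentiableAt) (fun x => (hder x).deriv) t 0
      rw [this]; simp [g0]
    intro t
    have h := hconst t
    have : g t * Complex.exp (-(c * t)) * Complex.exp (c * t) = Complex.exp (c * t) := by
      rw [h, one_mul]
    rwa [mul_assoc, ← Complex.exp_add, neg_add_cancel, Complex.exp_zero, mul_one] at this
  -- c is purely imaginary
  have hcre : c.re = 0 := by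
    have h1 := habs 1
    rw [hexp 1] at h1
    rw [Complex.norm_exp] at h1
    have : (c * (1 : ℝ)).re = 0 := (Real.exp_eq_one_iff _).1 h1
    simpa using this
  -- periodicity gives c = n * I
  obtain ⟨n, hn⟩ : ∃ n : ℤ, c * (2 * Real.pi : ℝ) = n * (2 * Real.pi * Complex.I) := by
    rw [← Complex.exp_eq_one_iff, ← hexp]
    exact hper
  have hc : c = n * Complex.I := by
    have h2π : ((2 * Real.pi : ℝ) : ℂ) ≠ 0 := by
      simp [Real.pi_ne_zero]
    field_simp at hn
    have : c * (2 * (Real.pi : ℂ)) = n * Complex.I * (2 * (Real.pi : ℂ)) := by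
      push_cast at hn; rw [hn]; ring
    exact mul_right_cancel₀ (by simp [Real.pi_ne_zero]) this
  exact ⟨n, fun t => by rw [hexp t, hc]; ring_nf⟩

section helpers
variable {q : ℝ}

lemma logq_ne (hq0 : 0 < q) (hq1 : q < 1) : Real.log q ≠ 0 :=
  ne_of_lt (Real.log_neg hq0 hq1)

lemma Gamma_ne_zero (hq0 : 0 < q) {z : ℂ} (hz : z ∈ _root_.Gamma q) : z ≠ 0 := by
  obtain ⟨k, hk⟩ := hz
  intro h
  rw [h] at hk
  simp at hk
  exact absurd hk.symm (zpow_pos hq0 k).ne'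

lemma kIdx_eq (hq0 : 0 < q) (hq1 : q < 1) {z : ℂ} {k : ℤ}
    (hk : ‖z‖ = q ^ k) : kIdx q z = k := by
  rw [kIdx, hk, Real.log_zpow, mul_div_assoc, div_self (logq_ne hq0 hq1), mul_one]

lemma kIdx_mul {z w : ℂ} (hz : z ≠ 0) (hw : w ≠ 0) :
    kIdx q (z * w) = kIdx q z + kIdx q w := by
  rw [kIdx, kIdx, kIdx, norm_mul, Real.log_mul (by simpa using hz) (by simpa using hw), add_div]

lemma uexp_eq {z : ℂ} (hz : z ≠ 0) :
    Complex.exp (Complex.I * (theta z : ℂ)) = z / ‖z‖ := by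
  have habs : (‖z‖ : ℂ) ≠ 0 := by simpa using hz
  have base : Complex.exp (Complex.I * (z.arg : ℂ)) = z / ‖z‖ := by
    rw [eq_div_iff habs, mul_comm Complex.I, mul_comm, Complex.norm_mul_exp_arg_mul_I]
  rw [theta]
  split_ifs with h
  · exact base
  · push_cast
    rw [mul_sub, Complex.exp_sub, base]
    have h2 : Complex.exp (Complex.I * (2 * (Real.pi : ℂ))) = 1 := by
      rw [mul_comm, ← Complex.exp_two_pi_mul_I]
    rw [h2, div_one]

lemma chi_eq (hq0 : 0 < q) (hq1 : q < 1) {γ z : ℂ} (hz : z ≠ 0) {k : ℤ} (hk : kIdx q γ = k) :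
    chi q γ z = Complex.exp (Complex.I * ((kIdx q z * theta γ : ℝ) : ℂ)) *
      (z / ‖z‖) ^ k := by
  rw [chi, hk]
  push_cast
  rw [mul_add, Complex.exp_add]
  congr 1
  rw [← uexp_eq hz, ← Complex.exp_int_mul]
  congr 1
  ring

end helpers

section main
variable {q : ℝ}

lemma circle_mem_Gamma {u : ℂ} (hu : ‖u‖ = 1) : u ∈ _root_.Gamma q :=
  ⟨0, by simpa using hu⟩

lemma qpow_mem_Gamma (hq0 : 0 < q) (l : ℤ) : ((q : ℂ)) ^ l ∈ _root_.Gamma q :=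
  ⟨l, by rw [norm_zpow, Complex.norm_real, Real.norm_eq_abs, abs_of_pos hq0]⟩

lemma theta_ofReal_pos (hq0 : 0 < q) : theta (q : ℂ) = 0 := by
  rw [theta, Complex.arg_ofReal_of_nonneg hq0.le]
  simp

lemma kIdx_q (hq0 : 0 < q) (hq1 : q < 1) : kIdx q (q : ℂ) = 1 := by
  have : ‖(q : ℂ)‖ = q ^ (1 : ℤ) := by
    rw [zpow_one, Complex.norm_real, Real.norm_eq_abs, abs_of_pos hq0]
  simpa using kIdx_eq hq0 hq1 this

lemma chi_at_q (hq0 : 0 < q) (hq1 : q < 1) {a : ℂ} (ha : a ≠ 0) :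
    chi q a (q : ℂ) = a / ‖a‖ := by
  rw [chi, theta_ofReal_pos hq0, kIdx_q hq0 hq1]
  simpa using uexp_eq ha

lemma chi_inj (hq0 : 0 < q) (hq1 : q < 1) {a b : ℂ}
    (ha : a ∈ _root_.Gamma q) (hb : b ∈ _root_.Gamma q)
    (h : ∀ z ∈ _root_.Gamma q, chi q a z = chi q b z) : a = b := by
  have hane := Gamma_ne_zero hq0 ha
  have hbne := Gamma_ne_zero hq0 hb
  obtain ⟨ka, hka⟩ := ha
  obtain ⟨kb, hkb⟩ := hb
  -- unit parts agree
  have hq : (q : ℂ) ∈ _root_.Gamma q := by simpa using qpow_mem_Gamma hq0 1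
  have hunit : a / ‖a‖ = b / ‖b‖ := by
    rw [← chi_at_q hq0 hq1 hane, ← chi_at_q hq0 hq1 hbne]
    exact h _ hq
  -- indices agree, using the point u = exp(-I)
  have hkk : ka = kb := by
    set t : ℝ := -1 with ht
    set u : ℂ := Complex.exp (t * Complex.I) with hu
    have huabs : ‖u‖ = 1 := Complex.norm_exp_ofReal_mul_I t
    have harg : u.arg = t := by
      rw [hu, Complex.exp_mul_I]
      exact Complex.arg_cos_add_sin_mul_I
        ⟨by rw [ht]; linarith [Real.pi_gt_three], by rw [ht]; linarith [Real.pi_gt_three]⟩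
    have htheta : theta u = t := by rw [theta, harg]; simp [ht]
    have hkIu : kIdx q u = (0 : ℤ) := kIdx_eq hq0 hq1 (by simpa using huabs)
    have hchia : chi q a u = Complex.exp (Complex.I * ((ka : ℝ) * t : ℝ)) := by
      rw [chi, htheta, hkIu, kIdx_eq hq0 hq1 hka]
      norm_num
    have hchib : chi q b u = Complex.exp (Complex.I * ((kb : ℝ) * t : ℝ)) := by
      rw [chi, htheta, hkIu, kIdx_eq hq0 hq1 hkb]
      norm_num
    have heq := h u (circle_mem_Gamma huabs)
    rw [hchia, hchib] at heq
    have hone : Complex.exp (Complex.I * ((ka : ℝ) * t : ℝ) - Complex.I * ((kb : ℝ) * t : ℝ)) = 1 := by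
      rw [Complex.exp_sub, heq, div_self (Complex.exp_ne_zero _)]
    obtain ⟨j, hj⟩ := Complex.exp_eq_one_iff.1 hone
    have hreal : (ka : ℝ) * t - (kb : ℝ) * t = j * (2 * Real.pi) := by
      have hC : Complex.I * (((ka : ℝ) * t - (kb : ℝ) * t : ℝ) : ℂ)
          = Complex.I * ((j * (2 * Real.pi) : ℝ) : ℂ) := by
        push_cast
        push_cast at hj
        linear_combination hj
      have := mul_left_cancel₀ Complex.I_ne_zero hC
      exact_mod_cast this
    rw [ht] at hreal
    by_contra hne
    have hj0 : j ≠ 0 := by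
      intro h0
      rw [h0] at hreal
      push_cast at hreal
      apply hne
      have : (ka : ℝ) = kb := by linarith
      exact_mod_cast this
    have h2j : (2 * (j : ℝ)) ≠ 0 := by
      have : ((2 * j : ℤ) : ℝ) ≠ 0 := Int.cast_ne_zero.2 (mul_ne_zero two_ne_zero hj0)
      push_cast at this
      exact this
    exact irrational_pi ⟨((kb : ℚ) - ka) / (2 * j), by
      push_cast
      rw [div_eq_iff h2j]
      ring_nf
      ring_nf at hreal
      linarith⟩
  -- conclude
  have haz : (‖a‖ : ℂ) ≠ 0 := by simpa using hane
  have hbz : (‖b‖ : ℂ) ≠ 0 := by simpa using hbne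
  have habs : (‖a‖ : ℂ) = (‖b‖ : ℂ) := by rw [hka, hkb, hkk]
  calc a = (‖a‖ : ℂ) * (a / ‖a‖) := by field_simp
    _ = (‖b‖ : ℂ) * (b / ‖b‖) := by rw [hunit, habs]
    _ = b := by field_simp

lemma chi_continuousOn (hq0 : 0 < q) (hq1 : q < 1) {γ : ℂ} (hγ : γ ∈ _root_.Gamma q) :
    ContinuousOn (fun z => chi q γ z) (_root_.Gamma q) := by
  obtain ⟨k, hk⟩ := hγ
  have hkI := kIdx_eq hq0 hq1 hk
  have hsub : _root_.Gamma q ⊆ {z : ℂ | z ≠ 0} := fun z hz => Gamma_ne_zero hq0 hz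
  apply ContinuousOn.congr
    (f := fun z => Complex.exp (Complex.I * ((kIdx q z * theta γ : ℝ) : ℂ)) *
      (z / ‖z‖) ^ k)
  · apply ContinuousOn.mono _ hsub
    intro z hz
    apply ContinuousAt.continuousWithinAt
    have hzne : z ≠ 0 := hz
    have habsC : ContinuousAt (fun z : ℂ => ((‖z‖ : ℝ) : ℂ)) z :=
      Complex.continuous_ofReal.continuousAt.comp continuous_norm.continuousAt
    have hkC : ContinuousAt (fun z : ℂ => kIdx q z) z :=
      ((Real.continuousAt_log (by simpa using hzne)).comp
        continuous_norm.continuousAt).div_const _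
    have hunit : ContinuousAt (fun z : ℂ => z / (‖z‖ : ℂ)) z :=
      continuousAt_id.div habsC (by simpa using hzne)
    have hunit_ne : z / (‖z‖ : ℂ) ≠ 0 :=
      div_ne_zero hzne (by simpa using hzne)
    exact (Complex.continuous_exp.continuousAt.comp
        ((continuousAt_const.mul (Complex.continuous_ofReal.continuousAt.comp
          (hkC.mul continuousAt_const))))).mul (hunit.zpow₀ k (Or.inl hunit_ne))
  · intro z hz
    exact chi_eq hq0 hq1 (hsub hz) hkI

lemma chi_abs {γ z : ℂ} : ‖(chi q γ z)‖ = 1 := by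
  rw [chi, Complex.norm_exp]
  simp

lemma chi_mul (hq0 : 0 < q) (hq1 : q < 1) {γ z w : ℂ} (hγ : γ ∈ _root_.Gamma q)
    (hz : z ≠ 0) (hw : w ≠ 0) :
    chi q γ (z * w) = chi q γ z * chi q γ w := by
  obtain ⟨k, hk⟩ := hγ
  have hkI := kIdx_eq hq0 hq1 hk
  rw [chi_eq hq0 hq1 (mul_ne_zero hz hw) hkI, chi_eq hq0 hq1 hz hkI, chi_eq hq0 hq1 hw hkI,
    kIdx_mul hz hw]
  have hzabs : (‖z‖ : ℂ) ≠ 0 := by simpa using hz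
  have hwabs : (‖w‖ : ℂ) ≠ 0 := by simpa using hw
  have hu : z * w / (‖(z * w)‖ : ℂ) =
      (z / ‖z‖) * (w / ‖w‖) := by
    rw [norm_mul]
    push_cast
    field_simp
  rw [hu, mul_zpow]
  rw [show ((kIdx q z + kIdx q w) * theta γ : ℝ) = (kIdx q z * theta γ + kIdx q w * theta γ : ℝ) by ring]
  push_cast
  rw [mul_add, Complex.exp_add]
  ring

lemma f_one {f : ℂ → ℂ} (habs : ∀ z ∈ _root_.Gamma q, ‖(f z)‖ = 1)
    (hmul : ∀ γ₁ γ₂ : ℂ, γ₁ ∈ _root_.Gamma q → γ₂ ∈ _root_.Gamma q →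
      f (γ₁ * γ₂) = f γ₁ * f γ₂) : f 1 = 1 := by
  have h1 : (1 : ℂ) ∈ _root_.Gamma q := circle_mem_Gamma (by simp)
  have hne : f 1 ≠ 0 := by
    intro h
    have := habs 1 h1
    rw [h] at this
    simp at this
  have hm := hmul 1 1 h1 h1
  rw [mul_one] at hm
  exact (mul_left_cancel₀ hne (by rw [mul_one, ← hm])).symm

lemma circle_char {f : ℂ → ℂ}
    (hc : ContinuousOn f (_root_.Gamma q))
    (habs : ∀ z ∈ _root_.Gamma q, ‖(f z)‖ = 1)
    (hmul : ∀ γ₁ γ₂ : ℂ, γ₁ ∈ _root_.Gamma q → γ₂ ∈ _root_.Gamma q →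
      f (γ₁ * γ₂) = f γ₁ * f γ₂) :
    ∃ n : ℤ, ∀ u : ℂ, ‖u‖ = 1 → f u = u ^ n := by
  set g : ℝ → ℂ := fun t => f (Complex.exp (t * Complex.I)) with hgdef
  have hmem : ∀ t : ℝ, Complex.exp ((t : ℂ) * Complex.I) ∈ _root_.Gamma q :=
    fun t => circle_mem_Gamma (Complex.norm_exp_ofReal_mul_I t)
  have hgc : Continuous g :=
    hc.comp_continuous
      (Complex.continuous_exp.comp (Complex.continuous_ofReal.mul continuous_const)) hmem
  have hgabs : ∀ t, ‖(g t)‖ = 1 := fun t => habs _ (hmem t)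
  have hgmul : ∀ s t, g (s + t) = g s * g t := by
    intro s t
    have he : Complex.exp (((s + t : ℝ) : ℂ) * Complex.I) =
        Complex.exp ((s : ℂ) * Complex.I) * Complex.exp ((t : ℂ) * Complex.I) := by
      rw [← Complex.exp_add]
      push_cast
      ring_nf
    rw [hgdef]
    simp only
    rw [he]
    exact hmul _ _ (hmem s) (hmem t)
  have hgper : g (2 * Real.pi) = 1 := by
    have he : Complex.exp (((2 * Real.pi : ℝ) : ℂ) * Complex.I) = 1 := by
      push_cast
      exact Complex.exp_two_pi_mul_I
    rw [hgdef]
    simp only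
    rw [he]
    exact f_one habs hmul
  obtain ⟨n, hn⟩ := char_classify g hgc hgabs hgmul hgper
  refine ⟨n, fun u hu => ?_⟩
  have hu1 : u = Complex.exp ((u.arg : ℂ) * Complex.I) := by
    conv_lhs => rw [← Complex.norm_mul_exp_arg_mul_I u]
    rw [hu]
    simp
  calc f u = g u.arg := by rw [hgdef]; simp only; rw [← hu1]
    _ = Complex.exp ((n : ℂ) * u.arg * Complex.I) := hn _
    _ = (Complex.exp ((u.arg : ℂ) * Complex.I)) ^ n := by
        rw [← Complex.exp_int_mul]; ring_nf
    _ = u ^ n := by rw [← hu1]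

end main

theorem stmt_5' (q : ℝ) (hq0 : 0 < q) (hq1 : q < 1) :
    (∀ γ : ℂ, γ ∈ _root_.Gamma q →
      ContinuousOn (fun γ' => chi q γ γ') (_root_.Gamma q) ∧
      (∀ γ' : ℂ, γ' ∈ _root_.Gamma q → ‖(chi q γ γ')‖ = 1) ∧
      (∀ γ₁ γ₂ : ℂ, γ₁ ∈ _root_.Gamma q → γ₂ ∈ _root_.Gamma q →
        chi q γ (γ₁ * γ₂) = chi q γ γ₁ * chi q γ γ₂)) ∧
    (∀ f : ℂ → ℂ,
      ContinuousOn f (_root_.Gamma q) →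
      (∀ γ' : ℂ, γ' ∈ _root_.Gamma q → ‖(f γ')‖ = 1) →
      (∀ γ₁ γ₂ : ℂ, γ₁ ∈ _root_.Gamma q → γ₂ ∈ _root_.Gamma q → f (γ₁ * γ₂) = f γ₁ * f γ₂) →
      ∃! γ : ℂ, γ ∈ _root_.Gamma q ∧ ∀ γ' : ℂ, γ' ∈ _root_.Gamma q → f γ' = chi q γ γ') := by
  constructor
  · intro γ hγ
    exact ⟨chi_continuousOn hq0 hq1 hγ, fun _ _ => chi_abs,
      fun z w hz hw => chi_mul hq0 hq1 hγ (Gamma_ne_zero hq0 hz) (Gamma_ne_zero hq0 hw)⟩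
  · intro f hc habs hmul
    have hqC : (q : ℂ) ≠ 0 := by
      simpa using hq0.ne'
    obtain ⟨n, hfu⟩ := circle_char hc habs hmul
    set c : ℂ := f q with hcdef
    have hqmem : (q : ℂ) ∈ _root_.Gamma q := by simpa using qpow_mem_Gamma hq0 1
    have hcabs : ‖c‖ = 1 := habs _ hqmem
    have hcne : c ≠ 0 := by
      intro h
      rw [h] at hcabs
      simp at hcabs
    -- f (q^l) = c^l
    have hql : ∀ l : ℤ, f ((q : ℂ) ^ l) = c ^ l := by
      intro l
      induction l using Int.induction_on with
      | zero => simpa using f_one habs hmul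
      | succ l ih =>
        rw [zpow_add_one₀ hqC, hmul _ _ (qpow_mem_Gamma hq0 l) hqmem, ih, ← hcdef,
          zpow_add_one₀ hcne]
      | pred l ih =>
        have h2 := hmul _ _ (qpow_mem_Gamma hq0 (-(l : ℤ) - 1)) hqmem
        have h3 : (q : ℂ) ^ (-(l : ℤ) - 1) * (q : ℂ) = (q : ℂ) ^ (-(l : ℤ)) := by
          rw [← zpow_add_one₀ hqC]
          norm_num
        rw [h3, ih, ← hcdef] at h2
        apply mul_right_cancel₀ hcne
        rw [← h2, ← zpow_add_one₀ hcne]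
        norm_num
    -- the candidate γ₀
    set γ0 : ℂ := (q : ℂ) ^ n * c with hγ0def
    have hγ0abs : ‖γ0‖ = q ^ n := by
      rw [hγ0def, norm_mul, norm_zpow, Complex.norm_real, Real.norm_eq_abs, abs_of_pos hq0, hcabs, mul_one]
    have hγ0mem : γ0 ∈ _root_.Gamma q := ⟨n, hγ0abs⟩
    have hγ0ne := Gamma_ne_zero hq0 hγ0mem
    have hkγ0 : kIdx q γ0 = n := kIdx_eq hq0 hq1 hγ0abs
    have hunit : γ0 / (‖γ0‖ : ℂ) = c := by
      rw [hγ0abs, hγ0def, show (((q ^ n : ℝ)) : ℂ) = (q : ℂ) ^ n by push_cast; ring,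
        mul_comm, mul_div_assoc, div_self (zpow_ne_zero n hqC), mul_one]
    have hP : ∀ z ∈ _root_.Gamma q, f z = chi q γ0 z := by
      intro z hz
      obtain ⟨l, hl⟩ := hz
      have hzne : z ≠ 0 := Gamma_ne_zero hq0 ⟨l, hl⟩
      have hkz : kIdx q z = l := kIdx_eq hq0 hq1 hl
      set u : ℂ := z / (‖z‖ : ℂ) with hudef
      have huabs : ‖u‖ = 1 := by
        rw [hudef, norm_div, Complex.norm_real, Real.norm_eq_abs, _root_.abs_of_nonneg (norm_nonneg z),
          div_self (by simpa using hzne)]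
      have hzdec : z = (q : ℂ) ^ l * u := by
        rw [hudef, hl, show (((q ^ l : ℝ)) : ℂ) = (q : ℂ) ^ l by push_cast; ring,
          mul_div_assoc', mul_comm, mul_div_assoc, div_self (zpow_ne_zero l hqC), mul_one]
      have hfz : f z = c ^ l * u ^ n := by
        conv_lhs => rw [hzdec]
        rw [hmul _ _ (qpow_mem_Gamma hq0 l) (circle_mem_Gamma huabs), hql l, hfu u huabs]
      have e1 : Complex.exp (Complex.I * (((l : ℝ) * theta γ0 : ℝ) : ℂ)) = c ^ l := by
        rw [show (Complex.I * (((l : ℝ) * theta γ0 : ℝ) : ℂ)) =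
            (l : ℂ) * (Complex.I * (theta γ0 : ℂ)) by push_cast; ring,
          Complex.exp_int_mul, uexp_eq hγ0ne, hunit]
      rw [hfz, chi_eq hq0 hq1 hzne hkγ0, hkz, e1, ← hudef]
    refine ⟨γ0, ⟨hγ0mem, hP⟩, ?_⟩
    rintro y ⟨hymem, hy⟩
    exact chi_inj hq0 hq1 hymem hγ0mem (fun z hz => by rw [← hy z hz, hP z hz])

end Aux

/-- for every `γ ∈ Γ` the map `γ' ↦ χ(γ, γ')` is a continuous character
of `Γ` (continuous on `Γ`, unimodular and multiplicative on `Γ`), and every continuous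
character of `Γ` arises this way for a unique `γ ∈ Γ`. -/
theorem stmt_5 (q : ℝ) (hq0 : 0 < q) (hq1 : q < 1) :
    (∀ γ : ℂ, γ ∈ Gamma q →
      ContinuousOn (fun γ' => chi q γ γ') (Gamma q) ∧
      (∀ γ' : ℂ, γ' ∈ Gamma q → ‖(chi q γ γ')‖ = 1) ∧
      (∀ γ₁ γ₂ : ℂ, γ₁ ∈ Gamma q → γ₂ ∈ Gamma q →
        chi q γ (γ₁ * γ₂) = chi q γ γ₁ * chi q γ γ₂)) ∧
    (∀ f : ℂ → ℂ,
      ContinuousOn f (Gamma q) →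
      (∀ γ' : ℂ, γ' ∈ Gamma q → ‖(f γ')‖ = 1) →
      (∀ γ₁ γ₂ : ℂ, γ₁ ∈ Gamma q → γ₂ ∈ Gamma q → f (γ₁ * γ₂) = f γ₁ * f γ₂) →
      ∃! γ : ℂ, γ ∈ Gamma q ∧ ∀ γ' : ℂ, γ' ∈ Gamma q → f γ' = chi q γ γ') :=
  stmt_5' q hq0 hq1
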